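/- Let p be a probability distribution on Z/nZ with m = min_i p(i) > 0, and let U be the uniform distribution on Z/nZ. Then for all k ≥ 1, VD(p^{*k}, U) ≤ (1 - n·m)^{k-1} · VD(p, U). Hence the k-fold convolution converges to uniform at an exponential rate. -/
import Mathlib


/-- Cyclic convolution of two distributions on Z/nZ. -/
def cyclicConv (n : ℕ) [NeZero n] (p q : ZMod n → ℝ) : ZMod n → ℝ :=
  fun i => ∑ j : ZMod n, p j * q (i - j)

/-- `iterConv n p k` is the (k+1)-fold cyclic convolution p^{*(k+1)};
so `iterConv n p 0 = p` and `iterConv n p (k-1) = p^{*k}`. -/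
def iterConv (n : ℕ) [NeZero n] (p : ZMod n → ℝ) : ℕ → ZMod n → ℝ
  | 0 => p
  | (k + 1) => cyclicConv n (iterConv n p k) p

lemma sum_shift (n : ℕ) [NeZero n] (p : ZMod n → ℝ) (j : ZMod n) :
    ∑ i : ZMod n, p (i - j) = ∑ i, p i :=
  Fintype.sum_equiv (Equiv.subRight j) _ _ (fun _ => rfl)

lemma iterConv_sum (n : ℕ) [NeZero n] (p : ZMod n → ℝ) (hp1 : ∑ i, p i = 1)
    (k : ℕ) : ∑ i, iterConv n p k i = 1 := by
  induction k with
  | zero => exact hp1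
  | succ k ih =>
    simp only [iterConv, cyclicConv]
    rw [Finset.sum_comm]
    calc ∑ j : ZMod n, ∑ i : ZMod n, iterConv n p k j * p (i - j)
        = ∑ j : ZMod n, iterConv n p k j * ∑ i : ZMod n, p (i - j) := by
          simp [Finset.mul_sum]
      _ = 1 := by
          simp only [sum_shift n p, hp1, mul_one, ih]

lemma conv_contract (n : ℕ) [NeZero n] (q p : ZMod n → ℝ) (m : ℝ)
    (hq1 : ∑ i, q i = 1) (hp1 : ∑ i, p i = 1)
    (hmle : ∀ i, m ≤ p i) :
    ∑ i : ZMod n, |cyclicConv n q p i - 1 / n| ≤ (1 - n * m) * ∑ i, |q i - 1 / n| := by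
  have hn : (n : ℝ) ≠ 0 := Nat.cast_ne_zero.mpr (NeZero.ne n)
  have hcard : (Fintype.card (ZMod n) : ℝ) = n := by rw [ZMod.card]
  have key : ∀ i : ZMod n,
      cyclicConv n q p i - 1 / n = ∑ j, (q j - 1 / n) * (p (i - j) - m) := by
    intro i
    have e1 : ∑ j : ZMod n, p (i - j) = 1 :=
      (Fintype.sum_equiv (Equiv.subLeft i) (fun j => p (i - j)) p (fun j => by simp)).trans hp1
    have hterm : ∀ j : ZMod n, (q j - 1 / n) * (p (i - j) - m)
        = q j * p (i - j) - m * q j - (1 / n) * p (i - j) + 1 / n * m := fun j => by ring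
    have expand : ∑ j : ZMod n, (q j - 1 / n) * (p (i - j) - m)
        = (∑ j, q j * p (i - j)) - m * (∑ j, q j)
          - (1 / n) * (∑ j : ZMod n, p (i - j)) + (Fintype.card (ZMod n) : ℝ) * (1 / n * m) := by
      simp only [hterm, Finset.sum_add_distrib, Finset.sum_sub_distrib, ← Finset.mul_sum,
        Finset.sum_const, Finset.card_univ, nsmul_eq_mul]
      ring
    rw [expand, e1, hq1, hcard, cyclicConv]
    field_simp
    ring
  calc ∑ i : ZMod n, |cyclicConv n q p i - 1 / n|
      ≤ ∑ i : ZMod n, ∑ j : ZMod n, |q j - 1 / n| * (p (i - j) - m) := by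
        apply Finset.sum_le_sum
        intro i _
        rw [key i]
        refine (Finset.abs_sum_le_sum_abs _ _).trans (le_of_eq ?_)
        apply Finset.sum_congr rfl
        intro j _
        rw [abs_mul, abs_of_nonneg (sub_nonneg.mpr (hmle (i - j)))]
    _ = ∑ j : ZMod n, |q j - 1 / n| * ∑ i : ZMod n, (p (i - j) - m) := by
        rw [Finset.sum_comm]
        exact Finset.sum_congr rfl fun j _ => (Finset.mul_sum _ _ _).symm
    _ = (1 - n * m) * ∑ i, |q i - 1 / n| := by
        have : ∀ j : ZMod n, ∑ i : ZMod n, (p (i - j) - m) = 1 - n * m := by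
          intro j
          rw [Finset.sum_sub_distrib, sum_shift n p j, hp1, Finset.sum_const,
            Finset.card_univ, nsmul_eq_mul, hcard]
        simp only [this]
        rw [← Finset.sum_mul, mul_comm]

/-- Exponential convergence: if m = min_i p(i) > 0 then for all k ≥ 1,
VD(p^{*k}, U) ≤ (1 - n·m)^{k-1} · VD(p, U). -/
theorem iterConv_exponential_convergence (n : ℕ) [NeZero n]
    (p : ZMod n → ℝ) (m : ℝ)
    (hp0 : ∀ i, 0 ≤ p i) (hp1 : ∑ i, p i = 1)
    (hm : m = Finset.univ.inf' Finset.univ_nonempty p) (hm0 : 0 < m)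
    (k : ℕ) (hk : 1 ≤ k) :
    (1 / 2) * ∑ i : ZMod n, |iterConv n p (k - 1) i - 1 / n|
      ≤ (1 - n * m) ^ (k - 1) * ((1 / 2) * ∑ i : ZMod n, |p i - 1 / n|) := by
  have hmle : ∀ i, m ≤ p i := fun i => hm ▸ Finset.inf'_le p (Finset.mem_univ i)
  have hcard : (Fintype.card (ZMod n) : ℝ) = n := by rw [ZMod.card]
  have hnm : (0 : ℝ) ≤ 1 - n * m := by
    have : (n : ℝ) * m = ∑ _i : ZMod n, m := by
      rw [Finset.sum_const, Finset.card_univ, nsmul_eq_mul, hcard]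
    have h2 : (n : ℝ) * m ≤ 1 := by
      rw [this, ← hp1]; exact Finset.sum_le_sum (fun i _ => hmle i)
    linarith
  have main : ∀ j : ℕ, ∑ i : ZMod n, |iterConv n p j i - 1 / n|
      ≤ (1 - n * m) ^ j * ∑ i : ZMod n, |p i - 1 / n| := by
    intro j
    induction j with
    | zero => simp [iterConv]
    | succ j ih =>
      calc ∑ i : ZMod n, |iterConv n p (j + 1) i - 1 / n|
          ≤ (1 - n * m) * ∑ i : ZMod n, |iterConv n p j i - 1 / n| :=
            conv_contract n (iterConv n p j) p m (iterConv_sum n p hp1 j) hp1 hmle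
        _ ≤ (1 - n * m) * ((1 - n * m) ^ j * ∑ i : ZMod n, |p i - 1 / n|) :=
            mul_le_mul_of_nonneg_left ih hnm
        _ = (1 - n * m) ^ (j + 1) * ∑ i : ZMod n, |p i - 1 / n| := by ring
  have := main (k - 1)
  nlinarith [this]
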